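/- arXiv:2401.11210 — 2 statements merged into one kernel-verified Lean document; each statement's English description precedes it below -/
import Mathlib

section
/- Let p be a prime and G an elementary abelian p-group of rank n ≥ 2 (so |G| = p^n), and work inside ℚ[G]. Then I ⊆ p·ℤ[G] (in particular I is an ideal of ℤ[G]), and J ∩ p·ℤ[G] = I. -/
open scoped Classical

noncomputable section

/-- The elementary abelian `p`-group of rank `n`, written multiplicatively. -/
abbrev EAG (p n : ℕ) : Type := Multiplicative (Fin n → ZMod p)

/-- The canonical ring homomorphism `ℤ[G] →+* ℚ[G]`. -/
def zgToQg (p n : ℕ) : MonoidAlgebra ℤ (EAG p n) →+* MonoidAlgebra ℚ (EAG p n) :=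
  ((MonoidAlgebra.lift ℤ (MonoidAlgebra ℚ (EAG p n)) (EAG p n))
    (MonoidAlgebra.of ℚ (EAG p n))).toRingHom

/-- `ℚ[G]` as an algebra over `ℤ[G]` via the canonical map. -/
noncomputable instance zgAlgebra (p n : ℕ) :
    Algebra (MonoidAlgebra ℤ (EAG p n)) (MonoidAlgebra ℚ (EAG p n)) :=
  (zgToQg p n).toAlgebra

/-- The idempotent `e_H = (1/|H|) ∑_{h ∈ H} h ∈ ℚ[G]` attached to a subgroup `H`. -/
def eIdem (p n : ℕ) [NeZero p] (H : Subgroup (EAG p n)) : MonoidAlgebra ℚ (EAG p n) :=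
  (Nat.card H : ℚ)⁻¹ • ∑ h : H, MonoidAlgebra.of ℚ (EAG p n) (h : EAG p n)

/-- The canonical image of `ℤ[G]` in `ℚ[G]`: the `ℤ`-span of the group elements. -/
def ZGimage (p n : ℕ) : Submodule ℤ (MonoidAlgebra ℚ (EAG p n)) :=
  Submodule.span ℤ (Set.range (MonoidAlgebra.of ℚ (EAG p n)))

/-- The maximal order `Γ = ∑_{H ≤ G} ℤ[G]·e_H`, as a `ℤ[G]`-submodule of `ℚ[G]`. -/
def GammaOrder (p n : ℕ) [NeZero p] :
    Submodule (MonoidAlgebra ℤ (EAG p n)) (MonoidAlgebra ℚ (EAG p n)) :=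
  Submodule.span (MonoidAlgebra ℤ (EAG p n)) (Set.range (eIdem p n))

/-- `J = |G|·Γ = p^n·Γ`. -/
def Jmod (p n : ℕ) [NeZero p] :
    Submodule (MonoidAlgebra ℤ (EAG p n)) (MonoidAlgebra ℚ (EAG p n)) :=
  Submodule.map
    (LinearMap.lsmul (MonoidAlgebra ℤ (EAG p n)) (MonoidAlgebra ℚ (EAG p n))
      ((p : MonoidAlgebra ℤ (EAG p n)) ^ n)) (GammaOrder p n)

/-- `I`: the `ℤ[G]`-submodule of `ℚ[G]` generated by `{|G|·e_H : H ≤ G, H ≠ G}`. -/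
def Imod (p n : ℕ) [NeZero p] :
    Submodule (MonoidAlgebra ℤ (EAG p n)) (MonoidAlgebra ℚ (EAG p n)) :=
  Submodule.span (MonoidAlgebra ℤ (EAG p n))
    {x | ∃ H : Subgroup (EAG p n), H ≠ ⊤ ∧ x = ((p : ℚ) ^ n) • eIdem p n H}

/-- `G̃ = ∑_{g ∈ G} g ∈ ℚ[G]`. -/
def Gtilde (p n : ℕ) [NeZero p] : MonoidAlgebra ℚ (EAG p n) :=
  ∑ g : EAG p n, MonoidAlgebra.of ℚ (EAG p n) g


/-! For a subgroup `H` of order `p^k`, `|G|·e_H = p^(n-k) · ∑_{h ∈ H} h`, which lies in `p·ℤ[G]`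
as soon as `H ≠ G`; this gives `I ⊆ J ∩ p·ℤ[G]`. Conversely `J = I + ℤ[G]·G̃ = I + ℤ·G̃`, since
`g·G̃ = G̃`, and `m·G̃ ∈ p·ℤ[G]` forces `p ∣ m` (compare coefficients at `1`). It remains to see
`p·G̃ ∈ I`: if `H` has index `p` and `T` is a transversal of `H`, then
`(∑_{t ∈ T} t)·|G|e_H = p·(∑_{t ∈ T} t)(∑_{h ∈ H} h) = p·G̃`. -/

open MonoidAlgebra

section GroupAlgebra

variable {k G : Type*} [Semiring k]

lemma mem_span_range_of_iff [Monoid G] {x : MonoidAlgebra ℚ G} :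
    x ∈ Submodule.span ℤ (Set.range (of ℚ G)) ↔
      ∃ a : MonoidAlgebra ℤ G, mapRingHom G (Int.castRingHom ℚ) a = x := by
  constructor
  · intro hx
    induction hx using Submodule.span_induction with
    | mem _ hg =>
      obtain ⟨g, rfl⟩ := hg
      exact ⟨of ℤ G g, by simp⟩
    | zero => exact ⟨0, map_zero _⟩
    | add _ _ _ _ hx hy =>
      obtain ⟨a, rfl⟩ := hx
      obtain ⟨b, rfl⟩ := hy
      exact ⟨a + b, map_add _ _ _⟩
    | smul z _ _ hx =>
      obtain ⟨a, rfl⟩ := hx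
      exact ⟨z • a, map_zsmul _ _ _⟩
  · rintro ⟨a, rfl⟩
    induction a using MonoidAlgebra.induction_on with
    | of g => exact Submodule.subset_span ⟨g, by simp⟩
    | add a b ha hb => simpa only [map_add] using add_mem ha hb
    | smul z a ha => simpa only [map_zsmul] using Submodule.smul_mem _ z ha

variable [Group G] [Fintype G]

lemma of_mul_sum_univ_of (g : G) : of k G g * ∑ h, of k G h = ∑ h, of k G h := by
  rw [Finset.mul_sum]
  exact Fintype.sum_equiv (Equiv.mulLeft g) _ _ fun h => (map_mul _ _ _).symm

lemma coeff_sum_univ_of_one : (∑ h, of k G h).coeff 1 = 1 := by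
  simp [coeff_sum, Finsupp.single_apply]

lemma sum_of_mul_sum_of_eq_of_isComplement {S : Set G} [Fintype S] {H : Subgroup G}
    (hS : Subgroup.IsComplement S H) :
    (∑ s : S, of k G s) * ∑ h : H, of k G h = ∑ g, of k G g := by
  rw [Finset.sum_mul_sum, ← Finset.sum_product']
  exact Fintype.sum_bijective _ hS _ _ fun x => (map_mul _ _ _).symm

end GroupAlgebra

section ElementaryAbelian

variable {p n : ℕ}

def pZGimage (p n : ℕ) : Submodule ℤ (MonoidAlgebra ℚ (EAG p n)) :=
  Submodule.map (LinearMap.lsmul ℤ (MonoidAlgebra ℚ (EAG p n)) (p : ℤ)) (ZGimage p n)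

lemma zgToQg_eq_mapRingHom : zgToQg p n = mapRingHom (EAG p n) (Int.castRingHom ℚ) :=
  MonoidAlgebra.ringHom_ext (fun r => by simp [zgToQg]) (fun g => by simp [zgToQg])

lemma smul_eq_zgToQg_mul (a : MonoidAlgebra ℤ (EAG p n)) (x : MonoidAlgebra ℚ (EAG p n)) :
    a • x = zgToQg p n a * x :=
  Algebra.smul_def a x

lemma mem_ZGimage_iff {x : MonoidAlgebra ℚ (EAG p n)} :
    x ∈ ZGimage p n ↔ ∃ a, zgToQg p n a = x := by
  rw [zgToQg_eq_mapRingHom]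
  exact mem_span_range_of_iff

lemma smul_mem_ZGimage (a : MonoidAlgebra ℤ (EAG p n)) {x : MonoidAlgebra ℚ (EAG p n)}
    (hx : x ∈ ZGimage p n) : a • x ∈ ZGimage p n := by
  obtain ⟨b, rfl⟩ := mem_ZGimage_iff.mp hx
  exact mem_ZGimage_iff.mpr ⟨a * b, by rw [smul_eq_zgToQg_mul, map_mul]⟩

lemma exists_coeff_one_eq_intCast {x : MonoidAlgebra ℚ (EAG p n)} (hx : x ∈ ZGimage p n) :
    ∃ z : ℤ, x.coeff 1 = z := by
  obtain ⟨a, rfl⟩ := mem_ZGimage_iff.mp hx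
  exact ⟨a.coeff 1, by simp [zgToQg_eq_mapRingHom]⟩

lemma mem_pZGimage_iff {x : MonoidAlgebra ℚ (EAG p n)} :
    x ∈ pZGimage p n ↔ ∃ w ∈ ZGimage p n, (p : ℤ) • w = x := by
  simp only [pZGimage, Submodule.mem_map, LinearMap.lsmul_apply]

lemma smul_mem_pZGimage (a : MonoidAlgebra ℤ (EAG p n)) {x : MonoidAlgebra ℚ (EAG p n)}
    (hx : x ∈ pZGimage p n) : a • x ∈ pZGimage p n := by
  obtain ⟨w, hw, rfl⟩ := mem_pZGimage_iff.mp hx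
  exact mem_pZGimage_iff.mpr ⟨a • w, smul_mem_ZGimage a hw, smul_comm _ _ _⟩

lemma natCast_pow_smul (x : MonoidAlgebra ℚ (EAG p n)) :
    ((p : MonoidAlgebra ℤ (EAG p n)) ^ n) • x = ((p : ℚ) ^ n) • x := by
  rw [smul_eq_zgToQg_mul, map_pow, map_natCast, Algebra.smul_def, map_pow, map_natCast]

lemma card_EAG [NeZero p] : Nat.card (EAG p n) = p ^ n := by
  simp [Nat.card_eq_fintype_card, ZMod.card]

variable [Fact p.Prime]

lemma pow_smul_eIdem {H : Subgroup (EAG p n)} {k : ℕ} (hk : k ≤ n) (hH : Nat.card H = p ^ k) :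
    ((p : ℚ) ^ n) • eIdem p n H = ((p : ℤ) ^ (n - k)) • ∑ h : H, of ℚ (EAG p n) h := by
  have hp : (p : ℚ) ≠ 0 := Nat.cast_ne_zero.mpr (Fact.out : p.Prime).ne_zero
  rw [eIdem, hH, smul_smul, ← Int.cast_smul_eq_zsmul ℚ]
  push_cast
  rw [← pow_sub₀ _ hp hk]

lemma sum_subgroup_mem_ZGimage (H : Subgroup (EAG p n)) :
    ∑ h : H, of ℚ (EAG p n) h ∈ ZGimage p n :=
  Submodule.sum_mem _ fun h _ => Submodule.subset_span ⟨h, rfl⟩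

lemma pow_smul_eIdem_mem_pZGimage {H : Subgroup (EAG p n)} (hH : H ≠ ⊤) :
    ((p : ℚ) ^ n) • eIdem p n H ∈ pZGimage p n := by
  have hdvd : Nat.card H ∣ p ^ n := card_EAG (p := p) (n := n) ▸ Subgroup.card_subgroup_dvd_card H
  obtain ⟨k, hk, hcard⟩ := (Nat.dvd_prime_pow Fact.out).mp hdvd
  have hkn : k < n := lt_of_le_of_ne hk fun hkn =>
    hH (Subgroup.eq_top_of_card_eq H (by rw [hcard, card_EAG, hkn]))
  rw [pow_smul_eIdem hk hcard, show n - k = n - k - 1 + 1 by omega, pow_succ', mul_smul]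
  exact mem_pZGimage_iff.mpr ⟨_, Submodule.smul_mem _ _ (sum_subgroup_mem_ZGimage H), rfl⟩

lemma Imod_le_pZGimage : (Imod p n).restrictScalars ℤ ≤ pZGimage p n := by
  intro x hx
  induction hx using Submodule.span_induction with
  | mem _ hx =>
    obtain ⟨H, hH, rfl⟩ := hx
    exact pow_smul_eIdem_mem_pZGimage hH
  | zero => exact zero_mem _
  | add _ _ _ _ hx hy => exact add_mem hx hy
  | smul a _ _ hx => exact smul_mem_pZGimage a hx

lemma Imod_le_Jmod : Imod p n ≤ Jmod p n :=
  Submodule.span_le.mpr fun _ ⟨H, _, hx⟩ =>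
    ⟨eIdem p n H, Submodule.subset_span ⟨H, rfl⟩,
      by rw [hx, LinearMap.lsmul_apply, natCast_pow_smul]⟩

lemma pow_smul_eIdem_top : ((p : ℚ) ^ n) • eIdem p n ⊤ = Gtilde p n := by
  rw [pow_smul_eIdem le_rfl (by rw [Subgroup.card_top, card_EAG]), Nat.sub_self, pow_zero, one_smul]
  exact Fintype.sum_equiv Subgroup.topEquiv.toEquiv _ _ fun _ => rfl

lemma Jmod_le_Imod_sup_span_Gtilde :
    Jmod p n ≤ Imod p n ⊔ Submodule.span (MonoidAlgebra ℤ (EAG p n)) {Gtilde p n} := by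
  rw [Jmod, Submodule.map_le_iff_le_comap, GammaOrder, Submodule.span_le]
  rintro _ ⟨H, rfl⟩
  rw [SetLike.mem_coe, Submodule.mem_comap, LinearMap.lsmul_apply, natCast_pow_smul]
  by_cases hH : H = ⊤
  · rw [hH, pow_smul_eIdem_top]
    exact Submodule.mem_sup_right (Submodule.mem_span_singleton_self _)
  · exact Submodule.mem_sup_left (Submodule.subset_span ⟨H, hH, rfl⟩)

lemma exists_smul_Gtilde_eq_zsmul (a : MonoidAlgebra ℤ (EAG p n)) :
    ∃ m : ℤ, a • Gtilde p n = m • Gtilde p n := by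
  induction a using MonoidAlgebra.induction_on with
  | of g =>
    refine ⟨1, ?_⟩
    rw [smul_eq_zgToQg_mul, one_smul, zgToQg_eq_mapRingHom, Gtilde]
    simpa using of_mul_sum_univ_of g
  | add a b ha hb =>
    obtain ⟨ma, ha⟩ := ha
    obtain ⟨mb, hb⟩ := hb
    exact ⟨ma + mb, by rw [add_smul, ha, hb, add_smul]⟩
  | smul z a ha =>
    obtain ⟨m, ha⟩ := ha
    exact ⟨z * m, by rw [smul_assoc, ha, smul_smul]⟩

lemma exists_eq_add_zsmul_Gtilde_of_mem_Jmod {x : MonoidAlgebra ℚ (EAG p n)}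
    (hx : x ∈ Jmod p n) : ∃ y ∈ Imod p n, ∃ m : ℤ, x = y + m • Gtilde p n := by
  obtain ⟨y, hy, z, hz, rfl⟩ := Submodule.mem_sup.mp (Jmod_le_Imod_sup_span_Gtilde hx)
  obtain ⟨a, rfl⟩ := Submodule.mem_span_singleton.mp hz
  obtain ⟨m, hm⟩ := exists_smul_Gtilde_eq_zsmul a
  exact ⟨y, hy, m, by rw [hm]⟩

lemma dvd_of_zsmul_Gtilde_mem_pZGimage {m : ℤ} (hm : m • Gtilde p n ∈ pZGimage p n) :
    (p : ℤ) ∣ m := by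
  obtain ⟨w, hw, hwm⟩ := mem_pZGimage_iff.mp hm
  obtain ⟨z, hz⟩ := exists_coeff_one_eq_intCast hw
  have hcoeff := congrArg (fun x : MonoidAlgebra ℚ (EAG p n) => x.coeff 1) hwm
  rw [coeff_smul_apply, coeff_smul_apply, hz, Gtilde, coeff_sum_univ_of_one, zsmul_eq_mul,
    zsmul_eq_mul, mul_one] at hcoeff
  exact ⟨z, by exact_mod_cast hcoeff.symm⟩

lemma exists_subgroup_card_eq_pow_pred : ∃ H : Subgroup (EAG p n), Nat.card H = p ^ (n - 1) :=
  Sylow.exists_subgroup_card_pow_prime p (by rw [card_EAG]; exact pow_dvd_pow p (Nat.sub_le n 1))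

lemma p_smul_Gtilde_mem_Imod (hn : 0 < n) : (p : ℤ) • Gtilde p n ∈ Imod p n := by
  obtain ⟨H, hH⟩ := exists_subgroup_card_eq_pow_pred (p := p) (n := n)
  have hH_ne_top : H ≠ ⊤ := by
    rintro rfl
    rw [Subgroup.card_top, card_EAG] at hH
    have := Nat.pow_right_injective (Fact.out : p.Prime).two_le hH
    omega
  obtain ⟨S, hS, -⟩ := Subgroup.exists_isComplement_left H 1
  have hgen : ((p : ℚ) ^ n) • eIdem p n H ∈ Imod p n :=
    Submodule.subset_span ⟨H, hH_ne_top, rfl⟩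
  have hsum : (∑ s : S, of ℤ (EAG p n) s) • ((p : ℚ) ^ n • eIdem p n H) = (p : ℤ) • Gtilde p n := by
    rw [pow_smul_eIdem (Nat.sub_le n 1) hH, Nat.sub_sub_self hn, pow_one, smul_comm,
      smul_eq_zgToQg_mul, zgToQg_eq_mapRingHom, map_sum, Gtilde,
      ← sum_of_mul_sum_of_eq_of_isComplement hS]
    simp
  exact hsum ▸ Submodule.smul_mem _ _ hgen

end ElementaryAbelian

/-- For `G` elementary abelian of rank `n ≥ 2`: `I ⊆ p·ℤ[G]` (in particular `I` is, by
construction, an ideal of `ℤ[G]`), and `J ∩ p·ℤ[G] = I`. -/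
theorem I_subset_pZG_and_J_inf_pZG_eq_I (p n : ℕ) [Fact p.Prime] (hn : 2 ≤ n) :
    (Imod p n).restrictScalars ℤ ≤
        Submodule.map (LinearMap.lsmul ℤ (MonoidAlgebra ℚ (EAG p n)) (p : ℤ)) (ZGimage p n) ∧
      (Jmod p n).restrictScalars ℤ ⊓
          Submodule.map (LinearMap.lsmul ℤ (MonoidAlgebra ℚ (EAG p n)) (p : ℤ)) (ZGimage p n) =
        (Imod p n).restrictScalars ℤ := by
  change _ ≤ pZGimage p n ∧ _ ⊓ pZGimage p n = _
  refine ⟨Imod_le_pZGimage, le_antisymm ?_ (le_inf (fun x hx => Imod_le_Jmod hx) Imod_le_pZGimage)⟩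
  rintro x ⟨hxJ, hxp⟩
  obtain ⟨y, hy, m, rfl⟩ := exists_eq_add_zsmul_Gtilde_of_mem_Jmod hxJ
  have hm : m • Gtilde p n ∈ pZGimage p n := by
    simpa using sub_mem hxp (Imod_le_pZGimage hy)
  obtain ⟨c, rfl⟩ := dvd_of_zsmul_Gtilde_mem_pZGimage hm
  rw [mul_comm, mul_smul]
  exact add_mem hy (Submodule.smul_mem _ c (p_smul_Gtilde_mem_Imod (by omega)))

end
end

section
/- Let p be a prime and G an elementary abelian p-group of rank n (finite, written multiplicatively). Let M := (Additive G) ⊗_ℤ ℤ̂_p[G] be the tensor product over ℤ of the additive group underlying G with the group ring ℤ̂_p[G] of G over the p-adic integers, and let N ⊆ M be the subgroup generated by all elements (g) ⊗ (λ·g) for g ∈ G and λ ∈ ℤ̂_p, where in the second factor g denotes the canonical image of g in ℤ̂_p[G]. Then the quotient group M/N is isomorphic, as an abelian group, to the direct sum ⊕_{g ∈ G} G/⟨g⟩, where ⟨g⟩ denotes the cyclic subgroup generated by g. -/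
/-!
Every element of `G` has order dividing `p`, so `A = Additive G` is an `𝔽_p`-vector space and
tensoring it with `ℤ_[p]` only sees `ℤ_[p] / p = 𝔽_p`: `a ⊗ λ ↦ (λ mod p) • a` is an isomorphism
`A ⊗ ℤ_[p] ≃ A`. Hence `A ⊗ ℤ_[p][G] ≃ (G → A)`, with `a ⊗ λ g` landing in the `g`-th coordinate.
This identification carries the generators `g ⊗ λ g` onto the multiples of `g` in the `g`-th
coordinate, i.e. the subgroup onto `Π g, ⟨g⟩`, and the quotient onto `Π g, A / ⟨g⟩`.
-/

open scoped TensorProduct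
open TensorProduct

section
variable {p : ℕ} [Fact p.Prime] {A : Type*} [AddCommGroup A] [Module (ZMod p) A]

theorem tmul_eq_tmul_of_toZMod_eq (a : A) {x y : ℤ_[p]}
    (h : PadicInt.toZMod x = PadicInt.toZMod y) : a ⊗ₜ[ℤ] x = a ⊗ₜ[ℤ] y := by
  have hxy : x - y ∈ RingHom.ker (PadicInt.toZMod : ℤ_[p] →+* ZMod p) := by
    rw [RingHom.mem_ker, map_sub, h, sub_self]
  rw [PadicInt.ker_toZMod, PadicInt.maximalIdeal_eq_span_p, Ideal.mem_span_singleton] at hxy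
  obtain ⟨μ, hμ⟩ := hxy
  rw [← sub_eq_zero, ← tmul_sub, hμ, ← nsmul_eq_mul, ← smul_tmul, ZModModule.char_nsmul_eq_zero,
    zero_tmul]

variable (p A) in
noncomputable def tensorPadicIntEquiv : A ⊗[ℤ] ℤ_[p] ≃ₗ[ℤ] A :=
  LinearEquiv.ofLinearMap
    (lift (LinearMap.mk₂ ℤ (fun a x => PadicInt.toZMod x • a) (fun _ _ _ => smul_add _ _ _)
      (fun _ _ _ => smul_comm _ _ _) (fun _ _ _ => by rw [map_add, add_smul])
      (fun _ _ _ => by rw [map_zsmul, smul_assoc])))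
    ((TensorProduct.mk ℤ A ℤ_[p]).flip 1)
    (by ext a; change PadicInt.toZMod (1 : ℤ_[p]) • a = a; rw [map_one, one_smul])
    (by
      ext a x
      change (PadicInt.toZMod x • a) ⊗ₜ[ℤ] (1 : ℤ_[p]) = a ⊗ₜ x
      rw [← ZMod.intCast_zmod_cast (PadicInt.toZMod x), Int.cast_smul_eq_zsmul, smul_tmul,
        zsmul_one]
      exact tmul_eq_tmul_of_toZMod_eq a (by simp))

@[simp]
theorem tensorPadicIntEquiv_tmul (a : A) (x : ℤ_[p]) :
    tensorPadicIntEquiv p A (a ⊗ₜ x) = PadicInt.toZMod x • a := rfl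

variable (p A) in
noncomputable def tensorMonoidAlgebraPadicIntEquiv (G : Type*) [Finite G] [DecidableEq G] :
    A ⊗[ℤ] MonoidAlgebra ℤ_[p] G ≃ₗ[ℤ] (G → A) :=
  LinearEquiv.lTensor A (MonoidAlgebra.coeffLinearEquiv ℤ) ≪≫ₗ finsuppRight ℤ ℤ A ℤ_[p] G ≪≫ₗ
    Finsupp.mapRange.linearEquiv (tensorPadicIntEquiv p A) ≪≫ₗ Finsupp.linearEquivFunOnFinite ℤ A G

theorem tensorMonoidAlgebraPadicIntEquiv_tmul_single {G : Type*} [Finite G] [DecidableEq G]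
    (a : A) (g : G) (x : ℤ_[p]) :
    tensorMonoidAlgebraPadicIntEquiv p A G (a ⊗ₜ MonoidAlgebra.single g x) =
      Pi.single g (PadicInt.toZMod x • a) := by
  -- `Finsupp.mapRange.linearEquiv` sees `A ⊗[ℤ] ℤ_[p]` through `TensorProduct.leftModule`, the
  -- equivalence through `AddCommGroup.toIntModule`; these agree only up to unfolding, so `simp`
  -- cannot step through the composite.
  have h : finsuppRight ℤ ℤ A ℤ_[p] G
      (LinearEquiv.lTensor A (MonoidAlgebra.coeffLinearEquiv ℤ) (a ⊗ₜ MonoidAlgebra.single g x)) =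
      Finsupp.single g (a ⊗ₜ x) := by
    simp
  change Finsupp.linearEquivFunOnFinite ℤ A G (Finsupp.mapRange (tensorPadicIntEquiv p A)
    (map_zero _) (finsuppRight ℤ ℤ A ℤ_[p] G (LinearEquiv.lTensor A
      (MonoidAlgebra.coeffLinearEquiv ℤ) (a ⊗ₜ MonoidAlgebra.single g x)))) = _
  rw [h, Finsupp.mapRange_single, tensorPadicIntEquiv_tmul, Finsupp.linearEquivFunOnFinite_single]

variable (p) in
noncomputable def spanTmulSingle {G : Type*} (x : G → A) :
    Submodule ℤ (A ⊗[ℤ] MonoidAlgebra ℤ_[p] G) :=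
  Submodule.span ℤ {y | ∃ (g : G) (c : ℤ_[p]), y = x g ⊗ₜ[ℤ] MonoidAlgebra.single g c}

theorem map_spanTmulSingle_eq_pi {G : Type*} [Finite G] [DecidableEq G] (x : G → A) :
    (spanTmulSingle p x).map (tensorMonoidAlgebraPadicIntEquiv p A G).toLinearMap =
      Submodule.pi Set.univ fun g => Submodule.span ℤ {x g} := by
  apply le_antisymm
  · rw [Submodule.map_le_iff_le_comap, spanTmulSingle, Submodule.span_le]
    rintro _ ⟨g, c, rfl⟩ h -
    rw [LinearEquiv.coe_coe, tensorMonoidAlgebraPadicIntEquiv_tmul_single, Pi.single_apply]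
    split_ifs with hg
    · subst hg
      exact ZMod.smul_mem (Submodule.mem_span_singleton_self _) _
    · exact zero_mem _
  · rw [← Submodule.iSup_map_single, iSup_le_iff]
    intro g
    rw [Submodule.map_span, Set.image_singleton, Submodule.span_singleton_le_iff_mem]
    have h := Submodule.mem_map_of_mem (f := (tensorMonoidAlgebraPadicIntEquiv p A G).toLinearMap)
      (Submodule.subset_span ⟨g, 1, rfl⟩ : x g ⊗ₜ MonoidAlgebra.single g 1 ∈ spanTmulSingle p x)
    rwa [LinearEquiv.coe_coe, tensorMonoidAlgebraPadicIntEquiv_tmul_single, map_one, one_smul] at h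

variable (p) in
noncomputable def quotSpanTmulSingleEquivPi {G : Type*} [Fintype G] [DecidableEq G] (x : G → A) :
    ((A ⊗[ℤ] MonoidAlgebra ℤ_[p] G) ⧸ spanTmulSingle p x) ≃ₗ[ℤ]
      ((g : G) → A ⧸ Submodule.span ℤ {x g}) :=
  Submodule.Quotient.equiv _ _ _ (map_spanTmulSingle_eq_pi x) ≪≫ₗ Submodule.quotientPi _

end

theorem ker_toAdditive_mk'_eq_span {G : Type*} [CommGroup G] (g : G) :
    LinearMap.ker (QuotientGroup.mk' (Subgroup.zpowers g)).toAdditive.toIntLinearMap =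
      Submodule.span ℤ {Additive.ofMul g} := by
  ext a
  rw [LinearMap.mem_ker, Submodule.mem_span_singleton]
  change QuotientGroup.mk (s := Subgroup.zpowers g) a.toMul = 1 ↔ _
  rw [QuotientGroup.eq_one_iff, Subgroup.mem_zpowers_iff]
  rfl

noncomputable def quotSpanOfMulEquiv {G : Type*} [CommGroup G] (g : G) :
    (Additive G ⧸ Submodule.span ℤ {Additive.ofMul g}) ≃ₗ[ℤ] Additive (G ⧸ Subgroup.zpowers g) :=
  Submodule.quotEquivOfEq _ _ (ker_toAdditive_mk'_eq_span g).symm ≪≫ₗ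
    LinearMap.quotKerEquivOfSurjective _ (QuotientGroup.mk'_surjective (Subgroup.zpowers g))

theorem HC1_iso_directSum_quotients_general (p : ℕ) [Fact p.Prime] (G : Type*)
    [CommGroup G] [Fintype G]
    (horder : ∀ g : G, g ≠ 1 → orderOf g = p) :
    letI N : Submodule ℤ (Additive G ⊗[ℤ] MonoidAlgebra ℤ_[p] G) :=
      Submodule.span ℤ
        {x | ∃ (g : G) (lam : ℤ_[p]),
          x = Additive.ofMul g ⊗ₜ[ℤ] (lam • MonoidAlgebra.of ℤ_[p] G g)}
    Nonempty (((Additive G ⊗[ℤ] MonoidAlgebra ℤ_[p] G) ⧸ N) ≃+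
      DirectSum G fun g : G => Additive (G ⧸ Subgroup.zpowers g)) := by
  classical
  have hexp (a : Additive G) : p • a = 0 := by
    rcases eq_or_ne a.toMul 1 with h | h
    · rw [← ofMul_toMul a, h, ofMul_one, nsmul_zero]
    · rw [← ofMul_toMul a, ← ofMul_pow, ← horder _ h, pow_orderOf_eq_one, ofMul_one]
  let : Module (ZMod p) (Additive G) := AddCommGroup.zmodModule hexp
  refine ⟨(Submodule.quotEquivOfEq _ (spanTmulSingle p Additive.ofMul) ?_ ≪≫ₗ
    quotSpanTmulSingleEquivPi p Additive.ofMul ≪≫ₗ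
    LinearEquiv.piCongrRight quotSpanOfMulEquiv ≪≫ₗ
    (DirectSum.linearEquivFunOnFintype ℤ G _).symm).toAddEquiv⟩
  simp only [spanTmulSingle, MonoidAlgebra.smul_of]

/-- For `G` an elementary abelian `p`-group of rank `n`, the quotient of
`G ⊗_ℤ ℤ̂_p[G]` by the subgroup generated by the elements `g ⊗ λ·g` (`g ∈ G`,
`λ ∈ ℤ̂_p`) is isomorphic, as an abelian group, to `⊕_{g ∈ G} G/⟨g⟩`. -/
theorem HC1_iso_directSum_quotients (p : ℕ) [Fact p.Prime] (n : ℕ) (G : Type*)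
    [CommGroup G] [Fintype G] (hcard : Fintype.card G = p ^ n)
    (horder : ∀ g : G, g ≠ 1 → orderOf g = p) :
    letI N : Submodule ℤ (Additive G ⊗[ℤ] MonoidAlgebra ℤ_[p] G) :=
      Submodule.span ℤ
        {x | ∃ (g : G) (lam : ℤ_[p]),
          x = Additive.ofMul g ⊗ₜ[ℤ] (lam • MonoidAlgebra.of ℤ_[p] G g)}
    Nonempty (((Additive G ⊗[ℤ] MonoidAlgebra ℤ_[p] G) ⧸ N) ≃+
      DirectSum G fun g : G => Additive (G ⧸ Subgroup.zpowers g)) :=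
  HC1_iso_directSum_quotients_general p G horder
end
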